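/- Let p > 1, M > 0, and consider the two-plane function u_0(x) = α x_1^+ − ᾱ x_1^− on B_1 ⊂ ℝⁿ with constants α, ᾱ ≥ 0. Suppose that for every C^1 vector field X with compact support in B_1, the identity ∫_{B_1} (|∇u_0|^p + pM χ_{{u_0>0}}) div X = p ∫_{B_1} |∇u_0|^{p-2} ∇u_0 (∇X) ∇u_0 holds. Then (p−1)(α^p − ᾱ^p) = pM. -/

import Mathlib

/-!
Test the identity with `X = φ e₁`, where `φ x = ψ (1/4 - |x|²)` is a radial bump supported in
`B_{1/2}` (`ψ = expNegInvGlue`, so `ψ' > 0` on `(0, ∞)`). Then `div X = ∂₁φ` and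
`|∇u₀|^{p-2} ∇u₀ (∇X) ∇u₀ = |∇u₀|^p ∂₁φ`, while `∫_{B₁} ∂₁φ = 0` by integration by parts.
Since both integrands are piecewise constant multiples of `∂₁φ`, the identity collapses to
`(α^p + pM - ᾱ^p) J = p (α^p - ᾱ^p) J` with `J = ∫_{B₁⁺} ∂₁φ`. Finally
`∂₁φ = -2 x₁ ψ'(1/4 - |x|²)` is `≤ 0` on `{x₁ > 0}` and `< 0` near `e₁/4`, so `J < 0` cancels.
-/

open MeasureTheory Metric Set
open scoped RealInnerProductSpace

section Integrals

variable {X : Type*} [MeasurableSpace X] {μ : Measure X}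

theorem integral_ite_mul_of_integral_eq_zero {s : Set X} [DecidablePred (· ∈ s)]
    (hs : MeasurableSet s) {D : X → ℝ} (hD : Integrable D μ) (hD₀ : ∫ x, D x ∂μ = 0)
    (a b : ℝ) :
    ∫ x, (if x ∈ s then a else b) * D x ∂μ = (a - b) * ∫ x in s, D x ∂μ := by
  have hsplit : ∀ x, (if x ∈ s then a else b) * D x = b * D x + (a - b) * s.indicator D x := by
    intro x
    by_cases hx : x ∈ s <;> simp [hx]; ring
  simp only [hsplit]
  rw [integral_add (hD.const_mul b) ((hD.indicator hs).const_mul _), integral_const_mul,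
    integral_const_mul, hD₀, integral_indicator hs]
  ring

theorem setIntegral_neg_of_nonpos_of_neg [TopologicalSpace X] [OpensMeasurableSpace X]
    [μ.IsOpenPosMeasure] {U : Set X} (hU : IsOpen U) {f : X → ℝ} (hf : ContinuousOn f U)
    (hfU : IntegrableOn f U μ) (hle : ∀ x ∈ U, f x ≤ 0) {x₀ : X} (hx₀ : x₀ ∈ U)
    (hfx₀ : f x₀ < 0) :
    ∫ x in U, f x ∂μ < 0 := by
  have hneg_open : IsOpen (U ∩ f ⁻¹' Iio 0) := hf.isOpen_inter_preimage hU isOpen_Iio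
  have hpos : 0 < ∫ x in U, -f x ∂μ := by
    rw [setIntegral_pos_iff_support_of_nonneg_ae
      (ae_restrict_of_forall_mem hU.measurableSet fun x hx => neg_nonneg.2 (hle x hx)) hfU.neg]
    refine (hneg_open.measure_pos μ ⟨x₀, hx₀, hfx₀⟩).trans_le (measure_mono ?_)
    rintro x ⟨hxU, hfx⟩
    exact ⟨neg_ne_zero.2 (ne_of_lt hfx), hxU⟩
  rw [integral_neg] at hpos
  linarith

end Integrals

section FDerivIntegral

variable {E : Type*} [NormedAddCommGroup E] [NormedSpace ℝ E] [MeasurableSpace E] [BorelSpace E]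
  {μ : Measure E}

theorem HasCompactSupport.integrable_fderiv_apply [IsFiniteMeasureOnCompacts μ] {φ : E → ℝ}
    (hsupp : HasCompactSupport φ) (hφ : ContDiff ℝ 1 φ) (v : E) :
    Integrable (fun x => fderiv ℝ φ x v) μ :=
  ((hφ.continuous_fderiv one_ne_zero).clm_apply continuous_const).integrable_of_hasCompactSupport
    (hsupp.fderiv_apply ℝ v)

variable [FiniteDimensional ℝ E] [μ.IsAddHaarMeasure]

theorem integral_fderiv_apply_eq_zero {φ : E → ℝ} (hφ : ContDiff ℝ 1 φ)
    (hsupp : HasCompactSupport φ) (v : E) :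
    ∫ x, fderiv ℝ φ x v ∂μ = 0 := by
  have := integral_mul_fderiv_eq_neg_fderiv_mul_of_integrable (μ := μ) (f := fun _ => (1 : ℝ))
    (g := φ) (v := v) (by simp) (by simpa using hsupp.integrable_fderiv_apply hφ v)
    (by simpa using hφ.continuous.integrable_of_hasCompactSupport hsupp)
    (fun _ _ => differentiableAt_const _) (fun x _ => hφ.differentiable one_ne_zero x)
  simpa using this

theorem setIntegral_fderiv_apply_eq_zero {φ : E → ℝ} (hφ : ContDiff ℝ 1 φ)
    (hsupp : HasCompactSupport φ) {U : Set E} (hU : tsupport φ ⊆ U) (v : E) :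
    ∫ x in U, fderiv ℝ φ x v ∂μ = 0 := by
  rw [setIntegral_eq_integral_of_forall_compl_eq_zero fun x hx => ?_,
    integral_fderiv_apply_eq_zero hφ hsupp v]
  simp [fderiv_of_notMem_tsupport ℝ (fun h => hx (hU h))]

end FDerivIntegral

theorem hasDerivAt_expNegInvGlue (t : ℝ) :
    HasDerivAt expNegInvGlue (t⁻¹ ^ 2 * expNegInvGlue t) t := by
  simpa using expNegInvGlue.hasDerivAt_polynomial_eval_inv_mul 1 t

section RadialBump

variable {E : Type*} [NormedAddCommGroup E]

noncomputable def radialBump (r : ℝ) (x : E) : ℝ :=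
  expNegInvGlue (r ^ 2 - ‖x‖ ^ 2)

theorem support_radialBump_subset {r : ℝ} (hr : 0 ≤ r) :
    Function.support (radialBump r : E → ℝ) ⊆ ball 0 r := by
  intro x hx
  have hpos : 0 < r ^ 2 - ‖x‖ ^ 2 :=
    not_le.1 fun h => hx (expNegInvGlue.zero_of_nonpos h)
  rw [mem_ball_zero_iff]
  nlinarith [norm_nonneg x]

theorem tsupport_radialBump_subset {r : ℝ} (hr : 0 ≤ r) :
    tsupport (radialBump r : E → ℝ) ⊆ closedBall 0 r :=
  closure_minimal ((support_radialBump_subset hr).trans ball_subset_closedBall) isClosed_closedBall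

theorem hasCompactSupport_radialBump [ProperSpace E] {r : ℝ} (hr : 0 ≤ r) :
    HasCompactSupport (radialBump r : E → ℝ) :=
  (isCompact_closedBall 0 r).of_isClosed_subset (isClosed_tsupport _)
    (tsupport_radialBump_subset hr)

variable [InnerProductSpace ℝ E]

theorem contDiff_radialBump (r : ℝ) {n : ℕ∞} : ContDiff ℝ n (radialBump r : E → ℝ) :=
  expNegInvGlue.contDiff.comp (contDiff_const.sub (contDiff_norm_sq ℝ))

theorem fderiv_radialBump_apply (r : ℝ) (x v : E) :
    fderiv ℝ (radialBump r) x v =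
      -(2 * ((r ^ 2 - ‖x‖ ^ 2)⁻¹ ^ 2 * expNegInvGlue (r ^ 2 - ‖x‖ ^ 2))) * ⟪x, v⟫ := by
  have hinner : HasFDerivAt (fun y : E => r ^ 2 - ‖y‖ ^ 2) (-(2 • innerSL ℝ x)) x :=
    (hasStrictFDerivAt_norm_sq x).hasFDerivAt.const_sub _
  change fderiv ℝ (expNegInvGlue ∘ fun y : E => r ^ 2 - ‖y‖ ^ 2) x v = _
  rw [((hasDerivAt_expNegInvGlue _).comp_hasFDerivAt x hinner).fderiv]
  simp only [smul_apply, neg_apply, innerSL_apply_apply, smul_eq_mul, nsmul_eq_mul]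
  ring

theorem fderiv_radialBump_apply_nonpos (r : ℝ) {x v : E} (h : 0 ≤ ⟪x, v⟫) :
    fderiv ℝ (radialBump r) x v ≤ 0 := by
  rw [fderiv_radialBump_apply]
  have hψ : 0 ≤ expNegInvGlue (r ^ 2 - ‖x‖ ^ 2) := expNegInvGlue.nonneg _
  exact mul_nonpos_of_nonpos_of_nonneg (by simp only [neg_nonpos]; positivity) h

theorem fderiv_radialBump_apply_neg {r : ℝ} {x v : E} (hx : ‖x‖ < r) (h : 0 < ⟪x, v⟫) :
    fderiv ℝ (radialBump r) x v < 0 := by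
  have hpos : 0 < r ^ 2 - ‖x‖ ^ 2 := by nlinarith [norm_nonneg x]
  have hψ : 0 < expNegInvGlue (r ^ 2 - ‖x‖ ^ 2) := expNegInvGlue.pos_of_pos hpos
  rw [fderiv_radialBump_apply]
  exact mul_neg_of_neg_of_pos (by simp only [neg_lt_zero]; positivity) h

end RadialBump

section RadialBumpIntegral

variable {E : Type*} [NormedAddCommGroup E] [InnerProductSpace ℝ E] [FiniteDimensional ℝ E]
  [MeasurableSpace E] [BorelSpace E] {μ : Measure E} [μ.IsOpenPosMeasure]
  [IsFiniteMeasureOnCompacts μ]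

theorem setIntegral_fderiv_radialBump_apply_neg {r : ℝ} (hr : 0 ≤ r) {U : Set E} (hU : IsOpen U)
    {v : E} (hUv : ∀ x ∈ U, 0 ≤ ⟪x, v⟫) {x₀ : E} (hx₀U : x₀ ∈ U) (hx₀r : ‖x₀‖ < r)
    (hx₀v : 0 < ⟪x₀, v⟫) :
    ∫ x in U, fderiv ℝ (radialBump r) x v ∂μ < 0 :=
  setIntegral_neg_of_nonpos_of_neg hU
    (((contDiff_radialBump r).continuous_fderiv one_ne_zero).clm_apply continuous_const).continuousOn
    ((hasCompactSupport_radialBump hr).integrable_fderiv_apply (contDiff_radialBump r) v).integrableOn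
    (fun x hx => fderiv_radialBump_apply_nonpos r (hUv x hx)) hx₀U
    (fderiv_radialBump_apply_neg hx₀r hx₀v)

end RadialBumpIntegral

theorem setIntegral_halfSpace_fderiv_radialBump_apply_single_neg {ι : Type*} [Fintype ι]
    [DecidableEq ι] {μ : Measure (EuclideanSpace ℝ ι)} [μ.IsOpenPosMeasure]
    [IsFiniteMeasureOnCompacts μ] {r R : ℝ} (hr : 0 < r) (hrR : r ≤ R) (i : ι) :
    ∫ x in {y : EuclideanSpace ℝ ι | 0 < y i} ∩ ball 0 R,
      fderiv ℝ (radialBump r) x (EuclideanSpace.single i 1) ∂μ < 0 := by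
  have hinner : ∀ x : EuclideanSpace ℝ ι, ⟪x, EuclideanSpace.single i 1⟫ = x i := fun x => by
    simp [EuclideanSpace.inner_single_right]
  have hnorm : ‖(r / 2) • EuclideanSpace.single i (1 : ℝ)‖ = r / 2 := by
    simp [norm_smul, abs_of_pos hr]
  refine setIntegral_fderiv_radialBump_apply_neg hr.le
    ((isOpen_lt continuous_const (by fun_prop)).inter isOpen_ball)
    (fun x hx => (hinner x).symm ▸ hx.1.le) (x₀ := (r / 2) • EuclideanSpace.single i 1)
    ⟨?_, ?_⟩ (by linarith) ?_
  · simpa using hr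
  · rw [mem_ball_zero_iff, hnorm]; linarith
  · rw [hinner]; simpa using hr

theorem sum_fderiv_smul_single_apply {ι : Type*} [Fintype ι] [DecidableEq ι]
    {φ : EuclideanSpace ℝ ι → ℝ} {x : EuclideanSpace ℝ ι} (hφ : DifferentiableAt ℝ φ x) (j : ι) :
    ∑ i, fderiv ℝ (fun y => φ y • EuclideanSpace.single j (1 : ℝ)) x
        (EuclideanSpace.single i 1) i = fderiv ℝ φ x (EuclideanSpace.single j 1) := by
  simp [fderiv_smul_const hφ]

theorem norm_rpow_sub_two_mul_inner_fderiv_smul_const {F : Type*} [NormedAddCommGroup F]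
    [InnerProductSpace ℝ F] {φ : F → ℝ} {x : F} (hφ : DifferentiableAt ℝ φ x) {e : F}
    (he : ‖e‖ = 1) {c p : ℝ} (hc : 0 ≤ c) (hp : p ≠ 0) :
    ‖c • e‖ ^ (p - 2) * ⟪fderiv ℝ (fun y => φ y • e) x (c • e), c • e⟫ =
      c ^ p * fderiv ℝ φ x e := by
  have hpow : c ^ p = c ^ (p - 2) * c ^ 2 := by
    rw [← Real.rpow_two, ← Real.rpow_add' hc (by simpa using hp), sub_add_cancel]
  rw [fderiv_smul_const hφ, ContinuousLinearMap.smulRight_apply, norm_smul, he,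
    Real.norm_of_nonneg hc, hpow, map_smul, smul_eq_mul, real_inner_smul_left,
    real_inner_smul_right, real_inner_self_eq_norm_sq, he, mul_one, one_pow]
  ring

theorem stmt7_general (n : ℕ) (p M α ᾱ : ℝ) (hp : 1 < p)
    (hα : 0 ≤ α) (hᾱ : 0 ≤ ᾱ)
    (g : EuclideanSpace ℝ (Fin (n + 1)) → EuclideanSpace ℝ (Fin (n + 1)))
    (hg : ∀ x, g x = if 0 < x 0 then α • EuclideanSpace.single 0 1
                     else ᾱ • EuclideanSpace.single 0 1)
    (hidentity : ∀ X : EuclideanSpace ℝ (Fin (n + 1)) → EuclideanSpace ℝ (Fin (n + 1)),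
        ContDiff ℝ 1 X → tsupport X ⊆ ball (0 : EuclideanSpace ℝ (Fin (n + 1))) 1 →
        ∫ x in ball (0 : EuclideanSpace ℝ (Fin (n + 1))) 1,
            (‖g x‖ ^ p + Set.indicator {y : EuclideanSpace ℝ (Fin (n + 1)) | 0 < y 0}
                (fun _ => p * M) x) *
              (∑ i : Fin (n + 1), fderiv ℝ X x (EuclideanSpace.single i 1) i)
          = p * ∫ x in ball (0 : EuclideanSpace ℝ (Fin (n + 1))) 1,
              ‖g x‖ ^ (p - 2) * ⟪fderiv ℝ X x (g x), g x⟫) :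
    (p - 1) * (α ^ p - ᾱ ^ p) = p * M := by
  set e : EuclideanSpace ℝ (Fin (n + 1)) := EuclideanSpace.single 0 1
  set s : Set (EuclideanSpace ℝ (Fin (n + 1))) := {y | 0 < y 0}
  set φ : EuclideanSpace ℝ (Fin (n + 1)) → ℝ := radialBump (1 / 2)
  have he : ‖e‖ = 1 := by simp [e]
  have hφ : ContDiff ℝ 1 φ := contDiff_radialBump _
  have hφc : HasCompactSupport φ := hasCompactSupport_radialBump (by norm_num)
  have hφB : tsupport φ ⊆ ball 0 1 :=
    (tsupport_radialBump_subset (by norm_num)).trans (closedBall_subset_ball (by norm_num))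
  have hs : MeasurableSet s := (isOpen_lt continuous_const (by fun_prop)).measurableSet
  have hgs : ∀ x, g x = (if x ∈ s then α else ᾱ) • e := fun x => (hg x).trans (ite_smul ..).symm
  have hgs_nonneg : ∀ x, 0 ≤ if x ∈ s then α else ᾱ := fun x => by split_ifs <;> assumption
  have hX := hidentity (fun x => φ x • e) (hφ.smul contDiff_const)
    ((tsupport_smul_subset_left _ _).trans hφB)
  have hL : ∀ x, (‖g x‖ ^ p + s.indicator (fun _ => p * M) x) *
      ∑ i, fderiv ℝ (fun x => φ x • e) x (EuclideanSpace.single i 1) i =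
      (if x ∈ s then α ^ p + p * M else ᾱ ^ p) * fderiv ℝ φ x e := fun x => by
    rw [sum_fderiv_smul_single_apply (hφ.differentiable one_ne_zero x), hgs, norm_smul, he,
      mul_one, Real.norm_of_nonneg (hgs_nonneg x)]
    by_cases hx : x ∈ s <;> simp [hx, e]
  have hR : ∀ x, ‖g x‖ ^ (p - 2) * ⟪fderiv ℝ (fun x => φ x • e) x (g x), g x⟫ =
      (if x ∈ s then α ^ p else ᾱ ^ p) * fderiv ℝ φ x e := fun x => by
    rw [hgs, norm_rpow_sub_two_mul_inner_fderiv_smul_const (hφ.differentiable one_ne_zero x) he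
      (hgs_nonneg x) (by linarith), apply_ite (· ^ p)]
  have hD := (hφc.integrable_fderiv_apply hφ e).restrict (μ := volume) (s := ball 0 1)
  have hD₀ : ∫ x in ball 0 1, fderiv ℝ φ x e = 0 := setIntegral_fderiv_apply_eq_zero hφ hφc hφB e
  simp only [hL, hR] at hX
  rw [integral_ite_mul_of_integral_eq_zero hs hD hD₀, integral_ite_mul_of_integral_eq_zero hs hD hD₀,
    Measure.restrict_restrict hs, ← mul_assoc] at hX
  have hJ := setIntegral_halfSpace_fderiv_radialBump_apply_single_neg (μ := volume)
    (by norm_num : (0 : ℝ) < 1 / 2) (by norm_num : (1 / 2 : ℝ) ≤ 1) (0 : Fin (n + 1))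
  linarith [mul_right_cancel₀ hJ.ne hX]

/-- The two-plane function u₀ = α x₁⁺ − ᾱ x₁⁻ has gradient g = α e₁ on {x₁ > 0}
and g = ᾱ e₁ on {x₁ ≤ 0}. If the weak energy identity
∫ (|∇u₀|^p + pM χ_{u₀>0}) div X = p ∫ |∇u₀|^{p-2} ⟨∇u₀, (∇X)∇u₀⟩
holds for all C¹ vector fields X compactly supported in B₁,
then (p−1)(α^p − ᾱ^p) = pM. -/
theorem stmt7 (n : ℕ) (p M α ᾱ : ℝ) (hp : 1 < p) (hM : 0 < M)
    (hα : 0 ≤ α) (hᾱ : 0 ≤ ᾱ)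
    (g : EuclideanSpace ℝ (Fin (n + 1)) → EuclideanSpace ℝ (Fin (n + 1)))
    (hg : ∀ x, g x = if 0 < x 0 then α • EuclideanSpace.single 0 1
                     else ᾱ • EuclideanSpace.single 0 1)
    (hidentity : ∀ X : EuclideanSpace ℝ (Fin (n + 1)) → EuclideanSpace ℝ (Fin (n + 1)),
        ContDiff ℝ 1 X → tsupport X ⊆ ball (0 : EuclideanSpace ℝ (Fin (n + 1))) 1 →
        ∫ x in ball (0 : EuclideanSpace ℝ (Fin (n + 1))) 1,
            (‖g x‖ ^ p + Set.indicator {y : EuclideanSpace ℝ (Fin (n + 1)) | 0 < y 0}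
                (fun _ => p * M) x) *
              (∑ i : Fin (n + 1), fderiv ℝ X x (EuclideanSpace.single i 1) i)
          = p * ∫ x in ball (0 : EuclideanSpace ℝ (Fin (n + 1))) 1,
              ‖g x‖ ^ (p - 2) * ⟪fderiv ℝ X x (g x), g x⟫) :
    (p - 1) * (α ^ p - ᾱ ^ p) = p * M :=
  stmt7_general n p M α ᾱ hp hα hᾱ g hg hidentity
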